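/- The primal-dual gradient operator of the separable minimax problem is λ-relatively Lipschitz with respect to its regularizer on encoded points, for λ := 1 + √(L^x/μ^x) + √(L^y/μ^y) + Λ^xx/μ^x + Λ^xy/√(μ^x μ^y) + Λ^yy/μ^y. Concretely: for all tuples w = (w^x, w^y, w^p, w^q), v = (v^x, v^y, v^p, v^q), z = (z^x, z^y, z^p, z^q) in 𝒳 × 𝒴 × 𝒳 × 𝒴, ⟨(μ^x w^x + ∇f(w^p) + ∇_x h(w^x, w^y)) − (μ^x z^x + ∇f(z^p) + ∇_x h(z^x, z^y)), w^x − v^x⟩ + ⟨(μ^y w^y + ∇g(w^q) − ∇_y h(w^x, w^y)) − (μ^y z^y + ∇g(z^q) − ∇_y h(z^x, z^y)), w^y − v^y⟩ + ⟨(w^p − w^x) − (z^p − z^x), ∇f(w^p) − ∇f(v^p)⟩ + ⟨(w^q − w^y) − (z^q − z^y), ∇g(w^q) − ∇g(v^q)⟩ ≤ λ·[μ^x(V_{z^x}(w^x) + V_{w^x}(v^x)) + μ^y(V_{z^y}(w^y) + V_{w^y}(v^y)) + V^f_{w^p}(z^p) + V^f_{v^p}(w^p) + V^g_{w^q}(z^q)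 + V^g_{v^q}(w^q)]. -/

import Mathlib

open scoped RealInnerProductSpace

/-- Bregman divergence `V^φ_u(v) = φ(v) - φ(u) - ⟪∇φ(u), v - u⟫`, with explicit gradient `φ'`. -/
noncomputable def breg {X : Type*} [NormedAddCommGroup X] [InnerProductSpace ℝ X]
    (φ : X → ℝ) (φ' : X → X) (u v : X) : ℝ :=
  φ v - φ u - ⟪φ' u, v - u⟫

/-! The left-hand side splits into a regularizer part, one part for each of `f` and `g`, and a
part coming from `h`. In the `f`-part, `⟪p - r, ∇f p - ∇f q⟫` is a combination of Bregman
divergences (three-point identity), and the two remaining terms pair a gradient difference with a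
primal difference: cocoercivity of a convex `L`-smooth gradient, `‖∇f u - ∇f v‖² ≤ 2L V^f_u(v)`,
and Young's inequality with weight `√(L/μ)` bound them by the regularizer. The `h`-part needs only
the blockwise Lipschitz bounds and Young's inequality with weights `Λˣˣ/μˣ`, `Λˣʸ/√(μˣμʸ)`,
`Λʸʸ/μʸ`. -/

open AffineMap

theorem mul_le_mul_add_of_sq_le {n b c μ V : ℝ} (hc : 0 ≤ c) (hμ : 0 < μ)
    (h : n ^ 2 ≤ 2 * (c ^ 2 * μ) * V) : n * b ≤ c * (V + μ * b ^ 2 / 2) := by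
  rcases hc.eq_or_lt with rfl | hc
  · have : n = 0 := by nlinarith
    simp [this]
  · have hcμ : 0 < c * μ := mul_pos hc hμ
    nlinarith [sq_nonneg (n - c * μ * b)]

theorem mul_mul_le_div_sqrt_mul {a b Λ μ₁ μ₂ : ℝ} (hΛ : 0 ≤ Λ) (hμ₁ : 0 < μ₁) (hμ₂ : 0 < μ₂) :
    Λ * (a * b) ≤ Λ / √(μ₁ * μ₂) * (μ₁ * a ^ 2 / 2 + μ₂ * b ^ 2 / 2) := by
  have hamgm : √(μ₁ * μ₂) * (a * b) ≤ μ₁ * a ^ 2 / 2 + μ₂ * b ^ 2 / 2 := by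
    have := two_mul_le_add_sq (√μ₁ * a) (√μ₂ * b)
    rw [mul_pow, mul_pow, Real.sq_sqrt hμ₁.le, Real.sq_sqrt hμ₂.le] at this
    rw [Real.sqrt_mul hμ₁.le]
    linarith
  rw [div_mul_eq_mul_div, le_div_iff₀ (by positivity)]
  nlinarith [mul_le_mul_of_nonneg_left hamgm hΛ]

section Bregman

variable {E : Type*} [NormedAddCommGroup E] [InnerProductSpace ℝ E] {f : E → ℝ} {f' : E → E}

theorem breg_three_point (a b c : E) :
    ⟪f' a - f' b, a - c⟫ = breg f f' b a + breg f f' a c - breg f f' b c := by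
  simp only [breg, inner_sub_left, inner_sub_right]
  ring

variable [CompleteSpace E]

theorem HasGradientAt.hasDerivAt_comp_lineMap {u v : E} {t : ℝ} {g : E}
    (hf : HasGradientAt f g (lineMap u v t)) :
    HasDerivAt (f ∘ lineMap (k := ℝ) u v) ⟪g, v - u⟫ t :=
  hf.hasFDerivAt.comp_hasDerivAt t hasDerivAt_lineMap

theorem ConvexOn.inner_gradient_le_sub (hconv : ConvexOn ℝ Set.univ f) {u v : E}
    (hf : HasGradientAt f (f' u) u) : ⟪f' u, v - u⟫ ≤ f v - f u := by
  have hline : HasDerivAt (f ∘ lineMap (k := ℝ) u v) ⟪f' u, v - u⟫ 0 :=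
    HasGradientAt.hasDerivAt_comp_lineMap (by simpa using hf)
  simpa [slope] using (hconv.comp_affineMap (lineMap u v)).le_slope_of_hasDerivAt
    (Set.mem_univ 0) (Set.mem_univ 1) zero_lt_one hline

theorem breg_nonneg (hconv : ConvexOn ℝ Set.univ f) {u v : E}
    (hf : HasGradientAt f (f' u) u) : 0 ≤ breg f f' u v :=
  sub_nonneg.2 (hconv.inner_gradient_le_sub hf)

variable {L : ℝ}

theorem breg_le_of_lipschitz_gradient (hf : ∀ x, HasGradientAt f (f' x) x)
    (hlip : ∀ a b, ‖f' a - f' b‖ ≤ L * ‖a - b‖) (u v : E) :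
    breg f f' u v ≤ L / 2 * ‖v - u‖ ^ 2 := by
  set ψ : ℝ → ℝ := fun t ↦ f (lineMap u v t) - t * ⟪f' u, v - u⟫ - L / 2 * t ^ 2 * ‖v - u‖ ^ 2
  have hψ (t : ℝ) : HasDerivAt ψ
      (⟪f' (lineMap u v t), v - u⟫ - ⟪f' u, v - u⟫ - L * t * ‖v - u‖ ^ 2) t := by
    exact ((hf _).hasDerivAt_comp_lineMap.sub (hasDerivAt_mul_const _)).sub
      ((((hasDerivAt_pow 2 t).const_mul (L / 2)).mul_const _).congr_deriv (by ring))
  have hψ' (t : ℝ) (ht : 0 < t) :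
      ⟪f' (lineMap u v t), v - u⟫ - ⟪f' u, v - u⟫ - L * t * ‖v - u‖ ^ 2 ≤ 0 := by
    have hdist : ‖lineMap u v t - u‖ = t * ‖v - u‖ := by
      rw [lineMap_apply_module', add_sub_cancel_right, norm_smul, Real.norm_of_nonneg ht.le]
    rw [← inner_sub_left, sub_nonpos]
    calc ⟪f' (lineMap u v t) - f' u, v - u⟫
        ≤ ‖f' (lineMap u v t) - f' u‖ * ‖v - u‖ := real_inner_le_norm _ _
      _ ≤ L * (t * ‖v - u‖) * ‖v - u‖ := by
        rw [← hdist]; exact mul_le_mul_of_nonneg_right (hlip _ _) (norm_nonneg _)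
      _ = L * t * ‖v - u‖ ^ 2 := by ring
  have hanti : AntitoneOn ψ (Set.Ici 0) :=
    antitoneOn_of_hasDerivWithinAt_nonpos (convex_Ici 0)
      (fun t _ ↦ (hψ t).continuousAt.continuousWithinAt)
      (fun t _ ↦ (hψ t).hasDerivWithinAt)
      (fun t ht ↦ hψ' t (by simpa using ht))
  have h01 := hanti (Set.mem_Ici.2 le_rfl) (Set.mem_Ici.2 zero_le_one) zero_le_one
  simp only [ψ, lineMap_apply_zero, lineMap_apply_one] at h01
  simp only [breg]
  linarith

/-- Cocoercivity of the gradient (Baillon–Haddad) in Bregman form. -/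
theorem sq_norm_sub_le_breg (hconv : ConvexOn ℝ Set.univ f) (hf : ∀ x, HasGradientAt f (f' x) x)
    (hlip : ∀ a b, ‖f' a - f' b‖ ≤ L * ‖a - b‖) (hL : 0 ≤ L) (u v : E) :
    ‖f' u - f' v‖ ^ 2 ≤ 2 * L * breg f f' u v := by
  rcases hL.eq_or_lt with rfl | hL
  · have : ‖f' u - f' v‖ = 0 := le_antisymm (by simpa using hlip u v) (norm_nonneg _)
    simp [this]
  -- For the gradient step `w` below, the three-point identity gives
  -- `V_u(v) = L⁻¹ ‖∇f v - ∇f u‖² - V_v(w) + V_u(w)`, and the descent lemma bounds `V_v(w)`.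
  set w := v - L⁻¹ • (f' v - f' u)
  have hvw : v - w = L⁻¹ • (f' v - f' u) := sub_sub_cancel _ _
  have hthree := breg_three_point (f := f) (f' := f') v u w
  have hstep := breg_le_of_lipschitz_gradient hf hlip v w
  have huw := breg_nonneg (v := w) hconv (hf u)
  rw [hvw, real_inner_smul_right, real_inner_self_eq_norm_sq] at hthree
  rw [← norm_neg, neg_sub, hvw, norm_smul, mul_pow, Real.norm_of_nonneg (inv_nonneg.2 hL.le)]
    at hstep
  rw [norm_sub_rev]
  have hcancel : L / 2 * (L⁻¹ ^ 2 * ‖f' v - f' u‖ ^ 2) = L⁻¹ / 2 * ‖f' v - f' u‖ ^ 2 := by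
    field_simp
  have hbound : L⁻¹ / 2 * ‖f' v - f' u‖ ^ 2 ≤ breg f f' u v := by linarith
  calc ‖f' v - f' u‖ ^ 2 = 2 * L * (L⁻¹ / 2 * ‖f' v - f' u‖ ^ 2) := by field_simp
    _ ≤ 2 * L * breg f f' u v := by gcongr

theorem gradient_terms_le (hconv : ConvexOn ℝ Set.univ f) (hf : ∀ x, HasGradientAt f (f' x) x)
    (hlip : ∀ a b, ‖f' a - f' b‖ ≤ L * ‖a - b‖) (hL : 0 ≤ L) {μ : ℝ} (hμ : 0 < μ)
    (x y z p q r : E) :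
    ⟪f' p - f' r, x - y⟫ + ⟪(p - x) - (r - z), f' p - f' q⟫
      ≤ breg f f' p r + breg f f' q p
        + √(L / μ) * (breg f f' p r + breg f f' q p
          + (μ * (1 / 2 * ‖z - x‖ ^ 2) + μ * (1 / 2 * ‖x - y‖ ^ 2))) := by
  have hsq : √(L / μ) ^ 2 * μ = L := by
    rw [Real.sq_sqrt (div_nonneg hL hμ.le), div_mul_cancel₀ _ hμ.ne']
  have hpr : ⟪f' p - f' r, x - y⟫ ≤ √(L / μ) * (breg f f' p r + μ * ‖x - y‖ ^ 2 / 2) :=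
    (real_inner_le_norm _ _).trans <| mul_le_mul_add_of_sq_le (Real.sqrt_nonneg _) hμ <| by
      rw [hsq]; exact sq_norm_sub_le_breg hconv hf hlip hL p r
  have hqp : ⟪z - x, f' p - f' q⟫ ≤ √(L / μ) * (breg f f' q p + μ * ‖z - x‖ ^ 2 / 2) := by
    rw [real_inner_comm]
    refine (real_inner_le_norm _ _).trans <| mul_le_mul_add_of_sq_le (Real.sqrt_nonneg _) hμ ?_
    rw [hsq, norm_sub_rev]; exact sq_norm_sub_le_breg hconv hf hlip hL q p
  have hthree : ⟪p - r, f' p - f' q⟫ ≤ breg f f' q p + breg f f' p r := by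
    rw [real_inner_comm, breg_three_point]
    linarith [breg_nonneg (v := r) hconv (hf q)]
  have hsplit : (p - x) - (r - z) = (p - r) + (z - x) := by abel
  rw [hsplit, inner_add_left]
  linarith

end Bregman

theorem real_inner_le_half_norm_sq_add {F : Type*} [NormedAddCommGroup F] [InnerProductSpace ℝ F]
    (a b : F) : ⟪a, b⟫ ≤ 1 / 2 * ‖a‖ ^ 2 + 1 / 2 * ‖b‖ ^ 2 := by
  linarith [real_inner_le_norm a b, two_mul_le_add_sq ‖a‖ ‖b‖]

theorem coupling_terms_le {X Y : Type*} [NormedAddCommGroup X] [InnerProductSpace ℝ X]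
    [NormedAddCommGroup Y] [InnerProductSpace ℝ Y] {μx μy Λxx Λxy Λyy : ℝ}
    (hμx : 0 < μx) (hμy : 0 < μy) (hΛxx : 0 ≤ Λxx) (hΛxy : 0 ≤ Λxy) (hΛyy : 0 ≤ Λyy)
    {a dx ex : X} {b dy ey : Y}
    (ha : ‖a‖ ≤ Λxx * ‖dx‖ + Λxy * ‖dy‖) (hb : ‖b‖ ≤ Λxy * ‖dx‖ + Λyy * ‖dy‖) :
    ⟪a, ex⟫ - ⟪b, ey⟫
      ≤ Λxx / μx * (μx * (1 / 2 * ‖dx‖ ^ 2) + μx * (1 / 2 * ‖ex‖ ^ 2))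
        + Λxy / √(μx * μy) * (μx * (1 / 2 * ‖dx‖ ^ 2) + μx * (1 / 2 * ‖ex‖ ^ 2)
          + μy * (1 / 2 * ‖dy‖ ^ 2) + μy * (1 / 2 * ‖ey‖ ^ 2))
        + Λyy / μy * (μy * (1 / 2 * ‖dy‖ ^ 2) + μy * (1 / 2 * ‖ey‖ ^ 2)) := by
  have hax : ⟪a, ex⟫ ≤ Λxx * (‖dx‖ * ‖ex‖) + Λxy * (‖dy‖ * ‖ex‖) := by
    nlinarith [real_inner_le_norm a ex, mul_le_mul_of_nonneg_right ha (norm_nonneg ex)]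
  have hby : -⟪b, ey⟫ ≤ Λxy * (‖dx‖ * ‖ey‖) + Λyy * (‖dy‖ * ‖ey‖) := by
    nlinarith [neg_le_abs ⟪b, ey⟫, abs_real_inner_le_norm b ey,
      mul_le_mul_of_nonneg_right hb (norm_nonneg ey)]
  have hxx := mul_mul_le_div_sqrt_mul (a := ‖dx‖) (b := ‖ex‖) hΛxx hμx hμx
  have hxy₁ := mul_mul_le_div_sqrt_mul (a := ‖dy‖) (b := ‖ex‖) hΛxy hμy hμx
  have hxy₂ := mul_mul_le_div_sqrt_mul (a := ‖dx‖) (b := ‖ey‖) hΛxy hμx hμy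
  have hyy := mul_mul_le_div_sqrt_mul (a := ‖dy‖) (b := ‖ey‖) hΛyy hμy hμy
  rw [Real.sqrt_mul_self hμx.le] at hxx
  rw [Real.sqrt_mul_self hμy.le] at hyy
  rw [mul_comm μy μx] at hxy₁
  linarith

theorem stmt_5_general {X Y : Type*} [NormedAddCommGroup X] [InnerProductSpace ℝ X]
    [FiniteDimensional ℝ X] [NormedAddCommGroup Y] [InnerProductSpace ℝ Y]
    [FiniteDimensional ℝ Y]
    (f : X → ℝ) (f' : X → X) (g : Y → ℝ) (g' : Y → Y)
    (hx : X × Y → X) (hy : X × Y → Y)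
    (μx μy Lx Ly Λxx Λxy Λyy : ℝ) (hμx : 0 < μx) (hμy : 0 < μy)
    (hLx : 0 ≤ Lx) (hLy : 0 ≤ Ly) (hΛxx : 0 ≤ Λxx) (hΛxy : 0 ≤ Λxy) (hΛyy : 0 ≤ Λyy)
    (hfconv : ConvexOn ℝ Set.univ f) (hgconv : ConvexOn ℝ Set.univ g)
    (hfd : ∀ x, HasGradientAt f (f' x) x) (hgd : ∀ y, HasGradientAt g (g' y) y)
    (hfsmooth : ∀ a b : X, ‖f' a - f' b‖ ≤ Lx * ‖a - b‖)
    (hgsmooth : ∀ a b : Y, ‖g' a - g' b‖ ≤ Ly * ‖a - b‖)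
    (hlip₁ : ∀ u v : X × Y, ‖hx u - hx v‖ ≤ Λxx * ‖u.1 - v.1‖ + Λxy * ‖u.2 - v.2‖)
    (hlip₂ : ∀ u v : X × Y, ‖hy u - hy v‖ ≤ Λxy * ‖u.1 - v.1‖ + Λyy * ‖u.2 - v.2‖)
    (lam : ℝ)
    (hlam : lam = 1 + Real.sqrt (Lx / μx) + Real.sqrt (Ly / μy)
        + Λxx / μx + Λxy / Real.sqrt (μx * μy) + Λyy / μy)
    (wx vx zx wp vp zp : X) (wy vy zy wq vq zq : Y) :
    ⟪(μx • wx + f' wp + hx (wx, wy)) - (μx • zx + f' zp + hx (zx, zy)), wx - vx⟫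
      + ⟪(μy • wy + g' wq - hy (wx, wy)) - (μy • zy + g' zq - hy (zx, zy)), wy - vy⟫
      + ⟪(wp - wx) - (zp - zx), f' wp - f' vp⟫
      + ⟪(wq - wy) - (zq - zy), g' wq - g' vq⟫
    ≤ lam *
        (μx * (1 / 2 * ‖zx - wx‖ ^ 2) + μx * (1 / 2 * ‖wx - vx‖ ^ 2)
          + μy * (1 / 2 * ‖zy - wy‖ ^ 2) + μy * (1 / 2 * ‖wy - vy‖ ^ 2)
          + breg f f' wp zp + breg f f' vp wp
          + breg g g' wq zq + breg g g' vq wq) := by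
  have hregx := mul_le_mul_of_nonneg_left
    (real_inner_le_half_norm_sq_add (wx - zx) (wx - vx)) hμx.le
  have hregy := mul_le_mul_of_nonneg_left
    (real_inner_le_half_norm_sq_add (wy - zy) (wy - vy)) hμy.le
  rw [norm_sub_rev] at hregx hregy
  have hf := gradient_terms_le hfconv hfd hfsmooth hLx hμx wx vx zx wp vp zp
  have hg := gradient_terms_le hgconv hgd hgsmooth hLy hμy wy vy zy wq vq zq
  have hh := coupling_terms_le (a := hx (wx, wy) - hx (zx, zy)) (b := hy (wx, wy) - hy (zx, zy))
    (dx := zx - wx) (dy := zy - wy) (ex := wx - vx) (ey := wy - vy)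
    hμx hμy hΛxx hΛxy hΛyy
    (by rw [norm_sub_rev zx, norm_sub_rev zy]; exact hlip₁ (wx, wy) (zx, zy))
    (by rw [norm_sub_rev zx, norm_sub_rev zy]; exact hlip₂ (wx, wy) (zx, zy))
  have hRx : 0 ≤ μx * (1 / 2 * ‖zx - wx‖ ^ 2) + μx * (1 / 2 * ‖wx - vx‖ ^ 2) := by positivity
  have hRy : 0 ≤ μy * (1 / 2 * ‖zy - wy‖ ^ 2) + μy * (1 / 2 * ‖wy - vy‖ ^ 2) := by positivity
  have hBf : 0 ≤ breg f f' wp zp + breg f f' vp wp :=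
    add_nonneg (breg_nonneg hfconv (hfd _)) (breg_nonneg hfconv (hfd _))
  have hBg : 0 ≤ breg g g' wq zq + breg g g' vq wq :=
    add_nonneg (breg_nonneg hgconv (hgd _)) (breg_nonneg hgconv (hgd _))
  have hcxx : 0 ≤ Λxx / μx := div_nonneg hΛxx hμx.le
  have hcxy : 0 ≤ Λxy / √(μx * μy) := div_nonneg hΛxy (Real.sqrt_nonneg _)
  have hcyy : 0 ≤ Λyy / μy := div_nonneg hΛyy hμy.le
  simp only [inner_sub_left, inner_add_left, real_inner_smul_left] at hregx hregy hf hg hh ⊢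
  rw [hlam]
  linarith [mul_nonneg (Real.sqrt_nonneg (Lx / μx)) (add_nonneg hRy hBg),
    mul_nonneg (Real.sqrt_nonneg (Ly / μy)) (add_nonneg hRx hBf),
    mul_nonneg hcxx (add_nonneg hRy (add_nonneg hBf hBg)), mul_nonneg hcxy (add_nonneg hBf hBg),
    mul_nonneg hcyy (add_nonneg hRx (add_nonneg hBf hBg))]

/-- The primal-dual gradient operator of the separable minimax problem is `λ`-relatively
Lipschitz with respect to its regularizer on encoded points, for
`λ = 1 + √(Lˣ/μˣ) + √(Lʸ/μʸ) + Λˣˣ/μˣ + Λˣʸ/√(μˣμʸ) + Λʸʸ/μʸ`. -/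
theorem stmt_5 {X Y : Type*} [NormedAddCommGroup X] [InnerProductSpace ℝ X]
    [FiniteDimensional ℝ X] [NormedAddCommGroup Y] [InnerProductSpace ℝ Y]
    [FiniteDimensional ℝ Y]
    (f : X → ℝ) (f' : X → X) (g : Y → ℝ) (g' : Y → Y)
    (h : X × Y → ℝ) (hx : X × Y → X) (hy : X × Y → Y)
    (μx μy Lx Ly Λxx Λxy Λyy : ℝ) (hμx : 0 < μx) (hμy : 0 < μy)
    (hLx : 0 ≤ Lx) (hLy : 0 ≤ Ly) (hΛxx : 0 ≤ Λxx) (hΛxy : 0 ≤ Λxy) (hΛyy : 0 ≤ Λyy)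
    (hfconv : ConvexOn ℝ Set.univ f) (hgconv : ConvexOn ℝ Set.univ g)
    (hfd : ∀ x, HasGradientAt f (f' x) x) (hgd : ∀ y, HasGradientAt g (g' y) y)
    (hfsmooth : ∀ a b : X, ‖f' a - f' b‖ ≤ Lx * ‖a - b‖)
    (hgsmooth : ∀ a b : Y, ‖g' a - g' b‖ ≤ Ly * ‖a - b‖)
    (hcc₁ : ∀ y : Y, ConvexOn ℝ Set.univ (fun x => h (x, y)))
    (hcc₂ : ∀ x : X, ConcaveOn ℝ Set.univ (fun y => h (x, y)))
    (hdx : ∀ p : X × Y, HasGradientAt (fun x => h (x, p.2)) (hx p) p.1)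
    (hdy : ∀ p : X × Y, HasGradientAt (fun y => h (p.1, y)) (hy p) p.2)
    (hlip₁ : ∀ u v : X × Y, ‖hx u - hx v‖ ≤ Λxx * ‖u.1 - v.1‖ + Λxy * ‖u.2 - v.2‖)
    (hlip₂ : ∀ u v : X × Y, ‖hy u - hy v‖ ≤ Λxy * ‖u.1 - v.1‖ + Λyy * ‖u.2 - v.2‖)
    (lam : ℝ)
    (hlam : lam = 1 + Real.sqrt (Lx / μx) + Real.sqrt (Ly / μy)
        + Λxx / μx + Λxy / Real.sqrt (μx * μy) + Λyy / μy)
    (wx vx zx wp vp zp : X) (wy vy zy wq vq zq : Y) :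
    ⟪(μx • wx + f' wp + hx (wx, wy)) - (μx • zx + f' zp + hx (zx, zy)), wx - vx⟫
      + ⟪(μy • wy + g' wq - hy (wx, wy)) - (μy • zy + g' zq - hy (zx, zy)), wy - vy⟫
      + ⟪(wp - wx) - (zp - zx), f' wp - f' vp⟫
      + ⟪(wq - wy) - (zq - zy), g' wq - g' vq⟫
    ≤ lam *
        (μx * (1 / 2 * ‖zx - wx‖ ^ 2) + μx * (1 / 2 * ‖wx - vx‖ ^ 2)
          + μy * (1 / 2 * ‖zy - wy‖ ^ 2) + μy * (1 / 2 * ‖wy - vy‖ ^ 2)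
          + breg f f' wp zp + breg f f' vp wp
          + breg g g' wq zq + breg g g' vq wq) :=
  stmt_5_general f f' g g' hx hy μx μy Lx Ly Λxx Λxy Λyy hμx hμy hLx hLy hΛxx hΛxy hΛyy hfconv
    hgconv hfd hgd hfsmooth hgsmooth hlip₁ hlip₂ lam hlam wx vx zx wp vp zp wy vy zy wq vq zq
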